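/- Assume the strong Legendre condition with constant a > 0. Then there exists a constant C > 0, depending only on k1,…,k4, such that for all unit vectors z1, z2 ∈ ℝ³ and all real 3×3 matrices p1, p2, setting w := z1 − z2 and q := p1 − p2, one has Σ_{i,α}(W_{p^i_α}(z1,p1) − W_{p^i_α}(z2,p2)) q^i_α ≥ a·|q|² − C·|p1|·|w|·|q|. -/

import Mathlib

set_option maxHeartbeats 1000000
set_option maxRecDepth 8000


noncomputable section

open MeasureTheory Metric Filter Topology

abbrev E3 : Type := EuclideanSpace ℝ (Fin 3)
abbrev V3 : Type := Fin 3 → ℝ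
abbrev M3 : Type := Matrix (Fin 3) (Fin 3) ℝ

/-- trace of a 3×3 matrix -/
def trA (p : M3) : ℝ := ∑ i, p i i

/-- curl vector: c(p)_i = Σ_{j,k} ε_{ijk} p^k_j -/
def curlv (p : M3) : V3 := ![p 2 1 - p 1 2, p 0 2 - p 2 0, p 1 0 - p 0 1]

def dot3 (a b : V3) : ℝ := ∑ i, a i * b i

def cross3 (a b : V3) : V3 :=
  ![a 1 * b 2 - a 2 * b 1, a 2 * b 0 - a 0 * b 2, a 0 * b 1 - a 1 * b 0]

def trSq (p : M3) : ℝ := ∑ i, ∑ j, p i j * p j i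

def frobSq (p : M3) : ℝ := ∑ i, ∑ j, (p i j) ^ 2

def normSq3 (a : V3) : ℝ := ∑ i, (a i) ^ 2

def eN (a : V3) : ℝ := Real.sqrt (normSq3 a)

def frobN (p : M3) : ℝ := Real.sqrt (frobSq p)

/-- Oseen–Frank density -/
def W (k1 k2 k3 k4 : ℝ) (z : V3) (p : M3) : ℝ :=
  k1 * (trA p) ^ 2 + k2 * (dot3 z (curlv p)) ^ 2 + k3 * normSq3 (cross3 z (curlv p))
    + (k2 + k4) * (trSq p - (trA p) ^ 2)

/-- W_{u^i} -/
def Wu (k1 k2 k3 k4 : ℝ) (z : V3) (p : M3) (i : Fin 3) : ℝ :=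
  deriv (fun s : ℝ => W k1 k2 k3 k4 (z + s • (Pi.single i (1 : ℝ) : V3)) p) 0

/-- W_{p^i_α} -/
def Wp (k1 k2 k3 k4 : ℝ) (z : V3) (p : M3) (i α : Fin 3) : ℝ :=
  deriv (fun s : ℝ => W k1 k2 k3 k4 z (p + s • Matrix.single i α (1 : ℝ))) 0

def Wuu (k1 k2 k3 k4 : ℝ) (z : V3) (p : M3) (i j : Fin 3) : ℝ :=
  deriv (fun s : ℝ => Wu k1 k2 k3 k4 (z + s • (Pi.single j (1 : ℝ) : V3)) p i) 0

def Wup (k1 k2 k3 k4 : ℝ) (z : V3) (p : M3) (i j β : Fin 3) : ℝ :=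
  deriv (fun s : ℝ => Wu k1 k2 k3 k4 z (p + s • Matrix.single j β (1 : ℝ)) i) 0

def Wpp (k1 k2 k3 k4 : ℝ) (z : V3) (p : M3) (i α j β : Fin 3) : ℝ :=
  deriv (fun s : ℝ => Wp k1 k2 k3 k4 z (p + s • Matrix.single j β (1 : ℝ)) i α) 0

def StrongLegendre (k1 k2 k3 k4 a : ℝ) : Prop :=
  ∀ z : V3, normSq3 z = 1 → ∀ q ξ : M3,
    a * frobSq ξ ≤ ∑ i, ∑ α, ∑ j, ∑ β, Wpp k1 k2 k3 k4 z q i α j β * ξ i α * ξ j β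

/-- standard basis direction -/
def e3 (α : Fin 3) : E3 := EuclideanSpace.single α 1

/-- partial derivative ∂_α f -/
def pd (f : E3 → ℝ) (α : Fin 3) (x : E3) : ℝ := fderiv ℝ f x (e3 α)

def lap (f : E3 → ℝ) (x : E3) : ℝ := ∑ α, pd (fun y => pd f α y) α x

/-- gradient matrix (∇u)^i_α = ∂_α u^i -/
def gradM (u : E3 → V3) (x : E3) : M3 := Matrix.of fun i α => pd (fun y => u y i) α x

/-- |∇w|² -/
def gradSqV (w : E3 → V3) (x : E3) : ℝ := frobSq (gradM w x)

/-- |∇²w|² -/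
def hessSqV (w : E3 → V3) (x : E3) : ℝ :=
  ∑ i, ∑ α, ∑ β, (pd (fun y => pd (fun z => w z i) α y) β x) ^ 2

/-- |∇³w|² -/
def d3SqV (w : E3 → V3) (x : E3) : ℝ :=
  ∑ i, ∑ α, ∑ β, ∑ γ,
    (pd (fun y => pd (fun z => pd (fun z' => w z' i) α z) β y) γ x) ^ 2

/-- |∇φ|² for scalar φ -/
def gradSqS (f : E3 → ℝ) (x : E3) : ℝ := ∑ α, (pd f α x) ^ 2

/-- |∇^k f|² (sum of squares of all k-th order partials) -/
def dkSq : ℕ → (E3 → ℝ) → E3 → ℝ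
  | 0, f, x => (f x) ^ 2
  | (n + 1), f, x => ∑ α, dkSq n (fun y => pd f α y) x

/-- smooth solution of the Ericksen–Leslie system on ℝ³ × (0,T) -/
def IsELSolution (k1 k2 k3 k4 : ℝ) (T : ℝ) (v u : ℝ → E3 → V3) (P : ℝ → E3 → ℝ) : Prop :=
  ContDiffOn ℝ (⊤ : ℕ∞) (fun q : ℝ × E3 => (v q.1 q.2, u q.1 q.2, P q.1 q.2))
    ((Set.Ioo 0 T) ×ˢ (Set.univ : Set E3)) ∧
  (∀ t ∈ Set.Ioo 0 T, ∀ x : E3, normSq3 (u t x) = 1) ∧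
  (∀ t ∈ Set.Ioo 0 T, ∀ x : E3,
    (∀ i : Fin 3,
      deriv (fun s => v s x i) t + (∑ j, v t x j * pd (fun y => v t y i) j x)
          + pd (fun y => P t y) i x
        = lap (fun y => v t y i) x
          - ∑ j, pd (fun y => ∑ k, pd (fun z => u t z k) i y
              * Wp k1 k2 k3 k4 (u t y) (gradM (u t) y) k j) j x) ∧
    (∑ j, pd (fun y => v t y j) j x = 0) ∧
    (∀ i : Fin 3,
      deriv (fun s => u s x i) t + (∑ j, v t x j * pd (fun y => u t y i) j x)
        = (∑ α, pd (fun y => Wp k1 k2 k3 k4 (u t y) (gradM (u t) y) i α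
              - ∑ k, u t y k * u t y i * Wp k1 k2 k3 k4 (u t y) (gradM (u t) y) k α) α x)
          - Wu k1 k2 k3 k4 (u t x) (gradM (u t) x) i
          + (∑ k, Wu k1 k2 k3 k4 (u t x) (gradM (u t) x) k * u t x i * u t x k)
          + (∑ α, ∑ k, Wp k1 k2 k3 k4 (u t x) (gradM (u t) x) k α
              * pd (fun y => u t y k) α x * u t x i)
          + (∑ α, ∑ k, Wp k1 k2 k3 k4 (u t x) (gradM (u t) x) k α
              * u t x k * pd (fun y => u t y i) α x)))

/-- F^{ij} = ∂_i u^k W_{p^k_j}(u,∇u) + v^i v^j -/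
def FijF (k1 k2 k3 k4 : ℝ) (v u : ℝ → E3 → V3) (t : ℝ) (i j : Fin 3) (x : E3) : ℝ :=
  (∑ k, pd (fun y => u t y k) i x * Wp k1 k2 k3 k4 (u t x) (gradM (u t) x) k j)
    + v t x i * v t x j

/-- canonical-pressure condition -/
def CanonicalPressure (k1 k2 k3 k4 : ℝ) (T : ℝ) (v u : ℝ → E3 → V3) (P : ℝ → E3 → ℝ) : Prop :=
  ∀ t ∈ Set.Ioo 0 T,
    (∀ i j : Fin 3, MemLp (fun x => FijF k1 k2 k3 k4 v u t i j x) 2 (volume : Measure E3)) ∧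
    MemLp (fun x => P t x) 2 (volume : Measure E3) ∧
    ∀ᵐ ξ : E3, VectorFourier.fourierIntegral Real.fourierChar volume (innerₗ E3) (fun x => (P t x : ℂ)) ξ
      = ∑ i, ∑ j, (((ξ i * ξ j / (∑ l, (ξ l) ^ 2)) : ℝ) : ℂ)
          * VectorFourier.fourierIntegral Real.fourierChar volume (innerₗ E3)
            (fun x => (FijF k1 k2 k3 k4 v u t i j x : ℂ)) ξ

/-- local uniform L³ norm: ‖g‖_{L³_R} -/
def l3loc (R : ℝ) (g : E3 → ℝ) : ℝ :=
  ⨆ x : E3, (∫ y in Metric.ball x R, |g y| ^ 3) ^ (3⁻¹ : ℝ)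

def IsCutoff (φ : E3 → ℝ) : Prop := ContDiff ℝ (⊤ : ℕ∞) φ ∧ HasCompactSupport φ

def WeakGradient (u0 : E3 → V3) (gu0 : E3 → M3) : Prop :=
  ∀ φ : E3 → ℝ, IsCutoff φ → ∀ i α : Fin 3,
    ∫ x : E3, u0 x i * pd φ α x = - ∫ x : E3, gu0 x i α * φ x

def WeakDivFree (v0 : E3 → V3) : Prop :=
  ∀ φ : E3 → ℝ, IsCutoff φ → ∫ x : E3, ∑ j, v0 x j * pd φ j x = 0


def Wbil (k1 k2 k3 k4 : ℝ) (z : V3) (p q : M3) : ℝ :=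
  k1 * trA p * trA q + k2 * dot3 z (curlv p) * dot3 z (curlv q)
  + k3 * dot3 (cross3 z (curlv p)) (cross3 z (curlv q))
  + (k2 + k4) * ((∑ i, ∑ j, p i j * q j i) - trA p * trA q)

lemma W_expand (k1 k2 k3 k4 : ℝ) (z : V3) (p q : M3) (s : ℝ) :
    W k1 k2 k3 k4 z (p + s • q)
      = W k1 k2 k3 k4 z p + (2 * Wbil k1 k2 k3 k4 z p q) * s
        + Wbil k1 k2 k3 k4 z q q * s ^ 2 := by
  simp only [W, Wbil, trA, curlv, dot3, cross3, trSq, normSq3, Fin.sum_univ_three,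
    Matrix.add_apply, Matrix.smul_apply, smul_eq_mul, Matrix.cons_val_zero,
    Matrix.cons_val_one, Matrix.head_cons, Matrix.cons_val_two, Matrix.tail_cons]
  ring


lemma deriv_quadratic (A B C : ℝ) : deriv (fun s : ℝ => A + B * s + C * s ^ 2) 0 = B := by
  have h : HasDerivAt (fun s : ℝ => A + B * s + C * s ^ 2) (B * 1 + C * (2 * 0 ^ 1)) 0 :=
    (((hasDerivAt_id (0:ℝ)).const_mul B).const_add A).add ((hasDerivAt_pow 2 (0:ℝ)).const_mul C)
  simpa using h.deriv

lemma Wp_eq (k1 k2 k3 k4 : ℝ) (z : V3) (p : M3) (i α : Fin 3) :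
    Wp k1 k2 k3 k4 z p i α = 2 * Wbil k1 k2 k3 k4 z p (Matrix.single i α 1) := by
  rw [Wp, funext fun s => W_expand k1 k2 k3 k4 z p (Matrix.single i α 1) s,
    deriv_quadratic]

lemma Wbil_smul_add (k1 k2 k3 k4 : ℝ) (z : V3) (p e r : M3) (s : ℝ) :
    Wbil k1 k2 k3 k4 z (p + s • e) r
      = Wbil k1 k2 k3 k4 z p r + Wbil k1 k2 k3 k4 z e r * s := by
  simp only [Wbil, trA, curlv, dot3, cross3, Fin.sum_univ_three,
    Matrix.add_apply, Matrix.smul_apply, smul_eq_mul, Matrix.cons_val_zero,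
    Matrix.cons_val_one, Matrix.head_cons, Matrix.cons_val_two, Matrix.tail_cons]
  ring

lemma Wbil_sub_left (k1 k2 k3 k4 : ℝ) (z : V3) (p1 p2 r : M3) :
    Wbil k1 k2 k3 k4 z (p1 - p2) r
      = Wbil k1 k2 k3 k4 z p1 r - Wbil k1 k2 k3 k4 z p2 r := by
  simp only [Wbil, trA, curlv, dot3, cross3, Fin.sum_univ_three,
    Matrix.sub_apply, Matrix.cons_val_zero,
    Matrix.cons_val_one, Matrix.head_cons, Matrix.cons_val_two, Matrix.tail_cons]
  ring

lemma Wpp_eq (k1 k2 k3 k4 : ℝ) (z : V3) (q : M3) (i α j β : Fin 3) :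
    Wpp k1 k2 k3 k4 z q i α j β
      = 2 * Wbil k1 k2 k3 k4 z (Matrix.single j β 1) (Matrix.single i α 1) := by
  have hfun : (fun s : ℝ => Wp k1 k2 k3 k4 z (q + s • Matrix.single j β (1:ℝ)) i α)
      = fun s : ℝ => (2 * Wbil k1 k2 k3 k4 z q (Matrix.single i α 1))
        + (2 * Wbil k1 k2 k3 k4 z (Matrix.single j β 1) (Matrix.single i α 1)) * s
        + 0 * s ^ 2 := by
    funext s
    rw [Wp_eq, Wbil_smul_add]
    ring
  rw [Wpp, hfun, deriv_quadratic]


lemma Wbil_add_right (k1 k2 k3 k4 : ℝ) (z : V3) (p q r : M3) :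
    Wbil k1 k2 k3 k4 z p (q + r)
      = Wbil k1 k2 k3 k4 z p q + Wbil k1 k2 k3 k4 z p r := by
  simp only [Wbil, trA, curlv, dot3, cross3, Fin.sum_univ_three,
    Matrix.add_apply, Matrix.cons_val_zero,
    Matrix.cons_val_one, Matrix.head_cons, Matrix.cons_val_two, Matrix.tail_cons]
  ring

lemma Wbil_smul_right (k1 k2 k3 k4 : ℝ) (z : V3) (p q : M3) (c : ℝ) :
    Wbil k1 k2 k3 k4 z p (c • q) = c * Wbil k1 k2 k3 k4 z p q := by
  simp only [Wbil, trA, curlv, dot3, cross3, Fin.sum_univ_three,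
    Matrix.smul_apply, smul_eq_mul, Matrix.cons_val_zero,
    Matrix.cons_val_one, Matrix.head_cons, Matrix.cons_val_two, Matrix.tail_cons]
  ring

lemma Wbil_comm (k1 k2 k3 k4 : ℝ) (z : V3) (p q : M3) :
    Wbil k1 k2 k3 k4 z p q = Wbil k1 k2 k3 k4 z q p := by
  simp only [Wbil, trA, curlv, dot3, cross3, Fin.sum_univ_three, Matrix.cons_val_zero,
    Matrix.cons_val_one, Matrix.head_cons, Matrix.cons_val_two, Matrix.tail_cons]
  ring

lemma stdBasis_smul (i α : Fin 3) (c : ℝ) :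
    Matrix.single i α c = c • Matrix.single i α (1:ℝ) := by
  rw [Matrix.smul_single, smul_eq_mul, mul_one]

lemma key_sum (k1 k2 k3 k4 : ℝ) (z : V3) (p q : M3) :
    (∑ i, ∑ α, Wbil k1 k2 k3 k4 z p (Matrix.single i α 1) * q i α)
      = Wbil k1 k2 k3 k4 z p q := by
  have hq : q = ∑ i, ∑ α, q i α • Matrix.single i α (1:ℝ) := by
    conv_lhs => rw [Matrix.matrix_eq_sum_single q]
    exact Finset.sum_congr rfl fun i _ => Finset.sum_congr rfl fun α _ => stdBasis_smul i α (q i α)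
  conv_rhs => rw [hq]
  simp only [Fin.sum_univ_three, Wbil_add_right, Wbil_smul_right]
  ring

lemma key_left (k1 k2 k3 k4 : ℝ) (z : V3) (r ξ : M3) :
    (∑ j, ∑ β, Wbil k1 k2 k3 k4 z (Matrix.single j β 1) r * ξ j β)
      = Wbil k1 k2 k3 k4 z ξ r := by
  simp only [Wbil_comm _ _ _ _ _ _ r]
  exact key_sum k1 k2 k3 k4 z r ξ

lemma legendre_sum (k1 k2 k3 k4 : ℝ) (z : V3) (q ξ : M3) :
    (∑ i, ∑ α, ∑ j, ∑ β, Wpp k1 k2 k3 k4 z q i α j β * ξ i α * ξ j β)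
      = 2 * Wbil k1 k2 k3 k4 z ξ ξ := by
  have h1 : ∀ i α : Fin 3,
      (∑ j, ∑ β, Wpp k1 k2 k3 k4 z q i α j β * ξ i α * ξ j β)
        = 2 * Wbil k1 k2 k3 k4 z ξ (Matrix.single i α 1) * ξ i α := by
    intro i α
    have : (∑ j, ∑ β, Wpp k1 k2 k3 k4 z q i α j β * ξ i α * ξ j β)
        = (∑ j, ∑ β, Wbil k1 k2 k3 k4 z (Matrix.single j β 1)
            (Matrix.single i α 1) * ξ j β) * (2 * ξ i α) := by
      rw [Finset.sum_mul]
      refine Finset.sum_congr rfl fun j _ => ?_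
      rw [Finset.sum_mul]
      refine Finset.sum_congr rfl fun β _ => ?_
      rw [Wpp_eq]; ring
    rw [this, key_left]; ring
  calc (∑ i, ∑ α, ∑ j, ∑ β, Wpp k1 k2 k3 k4 z q i α j β * ξ i α * ξ j β)
      = ∑ i, ∑ α, 2 * Wbil k1 k2 k3 k4 z ξ (Matrix.single i α 1) * ξ i α := by
        refine Finset.sum_congr rfl fun i _ => Finset.sum_congr rfl fun α _ => h1 i α
    _ = 2 * Wbil k1 k2 k3 k4 z ξ ξ := by
        rw [← key_sum k1 k2 k3 k4 z ξ ξ, Finset.mul_sum]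
        refine Finset.sum_congr rfl fun i _ => ?_
        rw [Finset.mul_sum]
        refine Finset.sum_congr rfl fun α _ => by ring


lemma normSq3_nonneg (a : V3) : 0 ≤ normSq3 a := by
  simp only [normSq3, Fin.sum_univ_three]; positivity

lemma frobSq_nonneg (p : M3) : 0 ≤ frobSq p := by
  simp only [frobSq, Fin.sum_univ_three]; positivity

lemma eN_nonneg (a : V3) : 0 ≤ eN a := Real.sqrt_nonneg _
lemma frobN_nonneg (p : M3) : 0 ≤ frobN p := Real.sqrt_nonneg _

lemma eN_one {z : V3} (h : normSq3 z = 1) : eN z = 1 := by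
  rw [eN, h, Real.sqrt_one]

lemma lagrange (a b : V3) :
    (dot3 a b) ^ 2 + normSq3 (cross3 a b) = normSq3 a * normSq3 b := by
  simp only [dot3, cross3, normSq3, Fin.sum_univ_three, Matrix.cons_val_zero,
    Matrix.cons_val_one, Matrix.head_cons, Matrix.cons_val_two, Matrix.tail_cons]
  ring

lemma abs_dot3_le (a b : V3) : |dot3 a b| ≤ eN a * eN b := by
  have h2 : (dot3 a b) ^ 2 ≤ normSq3 a * normSq3 b := by
    nlinarith [lagrange a b, normSq3_nonneg (cross3 a b)]
  calc |dot3 a b| = Real.sqrt ((dot3 a b) ^ 2) := (Real.sqrt_sq_eq_abs _).symm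
    _ ≤ Real.sqrt (normSq3 a * normSq3 b) := Real.sqrt_le_sqrt h2
    _ = eN a * eN b := Real.sqrt_mul (normSq3_nonneg a) _

lemma eN_cross_le (a b : V3) : eN (cross3 a b) ≤ eN a * eN b := by
  have h2 : normSq3 (cross3 a b) ≤ normSq3 a * normSq3 b := by
    nlinarith [lagrange a b, sq_nonneg (dot3 a b)]
  calc eN (cross3 a b) ≤ Real.sqrt (normSq3 a * normSq3 b) := Real.sqrt_le_sqrt h2
    _ = eN a * eN b := Real.sqrt_mul (normSq3_nonneg a) _

lemma eN_curl_le (p : M3) : eN (curlv p) ≤ 2 * frobN p := by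
  have h : normSq3 (curlv p) ≤ 2 ^ 2 * frobSq p := by
    simp only [normSq3, curlv, frobSq, Fin.sum_univ_three, Matrix.cons_val_zero,
      Matrix.cons_val_one, Matrix.head_cons, Matrix.cons_val_two, Matrix.tail_cons]
    nlinarith [sq_nonneg (p 2 1 + p 1 2), sq_nonneg (p 0 2 + p 2 0),
      sq_nonneg (p 1 0 + p 0 1), sq_nonneg (p 0 0), sq_nonneg (p 1 1), sq_nonneg (p 2 2),
      sq_nonneg (p 2 1), sq_nonneg (p 1 2), sq_nonneg (p 0 2), sq_nonneg (p 2 0),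
      sq_nonneg (p 1 0), sq_nonneg (p 0 1)]
  calc eN (curlv p) ≤ Real.sqrt (2 ^ 2 * frobSq p) := Real.sqrt_le_sqrt h
    _ = 2 * frobN p := by
        rw [Real.sqrt_mul (by positivity), Real.sqrt_sq (by norm_num : (0:ℝ) ≤ 2)]; rfl

lemma Wbil_z_diff (k1 k2 k3 k4 : ℝ) (z1 z2 : V3) (p q : M3) :
    Wbil k1 k2 k3 k4 z1 p q - Wbil k1 k2 k3 k4 z2 p q
      = k2 * (dot3 (z1 - z2) (curlv p) * dot3 z1 (curlv q)
            + dot3 z2 (curlv p) * dot3 (z1 - z2) (curlv q))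
        + k3 * (dot3 (cross3 (z1 - z2) (curlv p)) (cross3 z1 (curlv q))
            + dot3 (cross3 z2 (curlv p)) (cross3 (z1 - z2) (curlv q))) := by
  simp only [Wbil, trA, curlv, dot3, cross3, Fin.sum_univ_three, Pi.sub_apply,
    Matrix.cons_val_zero, Matrix.cons_val_one, Matrix.head_cons, Matrix.cons_val_two,
    Matrix.tail_cons]
  ring

lemma Wbil_z_diff_bound (k1 k2 k3 k4 : ℝ) {z1 z2 : V3} (p q : M3)
    (hz1 : normSq3 z1 = 1) (hz2 : normSq3 z2 = 1) :
    |Wbil k1 k2 k3 k4 z1 p q - Wbil k1 k2 k3 k4 z2 p q|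
      ≤ (|k2| + |k3|) * 8 * (frobN p * (eN (z1 - z2) * frobN q)) := by
  set w := z1 - z2
  set cp := curlv p
  set cq := curlv q
  have hcp : eN cp ≤ 2 * frobN p := eN_curl_le p
  have hcq : eN cq ≤ 2 * frobN q := eN_curl_le q
  have hew : (0:ℝ) ≤ eN w := eN_nonneg w
  have hfp : (0:ℝ) ≤ frobN p := frobN_nonneg p
  have hfq : (0:ℝ) ≤ frobN q := frobN_nonneg q
  have hcp0 : (0:ℝ) ≤ eN cp := eN_nonneg cp
  have hcq0 : (0:ℝ) ≤ eN cq := eN_nonneg cq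
  -- four product bounds
  have b1 : |dot3 w cp * dot3 z1 cq| ≤ (eN w * (2 * frobN p)) * (2 * frobN q) := by
    rw [abs_mul]
    have h1 : |dot3 w cp| ≤ eN w * (2 * frobN p) :=
      le_trans (abs_dot3_le w cp) (mul_le_mul_of_nonneg_left hcp hew)
    have h2 : |dot3 z1 cq| ≤ 2 * frobN q := by
      have := abs_dot3_le z1 cq
      rw [eN_one hz1, one_mul] at this
      exact le_trans this hcq
    exact mul_le_mul h1 h2 (abs_nonneg _) (by positivity)
  have b2 : |dot3 z2 cp * dot3 w cq| ≤ (2 * frobN p) * (eN w * (2 * frobN q)) := by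
    rw [abs_mul]
    have h1 : |dot3 z2 cp| ≤ 2 * frobN p := by
      have := abs_dot3_le z2 cp
      rw [eN_one hz2, one_mul] at this
      exact le_trans this hcp
    have h2 : |dot3 w cq| ≤ eN w * (2 * frobN q) :=
      le_trans (abs_dot3_le w cq) (mul_le_mul_of_nonneg_left hcq hew)
    exact mul_le_mul h1 h2 (abs_nonneg _) (by positivity)
  have b3 : |dot3 (cross3 w cp) (cross3 z1 cq)| ≤ (eN w * (2 * frobN p)) * (2 * frobN q) := by
    have h1 : eN (cross3 w cp) ≤ eN w * (2 * frobN p) :=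
      le_trans (eN_cross_le w cp) (mul_le_mul_of_nonneg_left hcp hew)
    have h2 : eN (cross3 z1 cq) ≤ 2 * frobN q := by
      have := eN_cross_le z1 cq
      rw [eN_one hz1, one_mul] at this
      exact le_trans this hcq
    exact le_trans (abs_dot3_le _ _)
      (mul_le_mul h1 h2 (eN_nonneg _) (by positivity))
  have b4 : |dot3 (cross3 z2 cp) (cross3 w cq)| ≤ (2 * frobN p) * (eN w * (2 * frobN q)) := by
    have h1 : eN (cross3 z2 cp) ≤ 2 * frobN p := by
      have := eN_cross_le z2 cp
      rw [eN_one hz2, one_mul] at this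
      exact le_trans this hcp
    have h2 : eN (cross3 w cq) ≤ eN w * (2 * frobN q) :=
      le_trans (eN_cross_le w cq) (mul_le_mul_of_nonneg_left hcq hew)
    exact le_trans (abs_dot3_le _ _)
      (mul_le_mul h1 h2 (eN_nonneg _) (by positivity))
  rw [Wbil_z_diff]
  calc |k2 * (dot3 w cp * dot3 z1 cq + dot3 z2 cp * dot3 w cq)
        + k3 * (dot3 (cross3 w cp) (cross3 z1 cq) + dot3 (cross3 z2 cp) (cross3 w cq))|
      ≤ |k2| * (|dot3 w cp * dot3 z1 cq| + |dot3 z2 cp * dot3 w cq|)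
        + |k3| * (|dot3 (cross3 w cp) (cross3 z1 cq)| + |dot3 (cross3 z2 cp) (cross3 w cq)|) := by
        refine le_trans (abs_add_le _ _) ?_
        rw [abs_mul, abs_mul]
        gcongr <;> exact abs_add_le _ _
    _ ≤ (|k2| + |k3|) * 8 * (frobN p * (eN w * frobN q)) := by
        nlinarith [abs_nonneg k2, abs_nonneg k3, b1, b2, b3, b4,
          mul_nonneg hfp (mul_nonneg hew hfq)]

/-- coercivity of the difference of W_p terms
(estimate (5.14)). -/
theorem Wp_difference_coercivity (k1 k2 k3 k4 a : ℝ) (ha : 0 < a)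
    (hLeg : StrongLegendre k1 k2 k3 k4 a) :
    ∃ C : ℝ, 0 < C ∧
      ∀ (z1 z2 : V3) (p1 p2 : M3),
        normSq3 z1 = 1 → normSq3 z2 = 1 →
        a * frobSq (p1 - p2) - C * frobN p1 * eN (z1 - z2) * frobN (p1 - p2)
          ≤ ∑ i, ∑ α,
              (Wp k1 k2 k3 k4 z1 p1 i α - Wp k1 k2 k3 k4 z2 p2 i α)
                * (p1 i α - p2 i α) := by
  refine ⟨(|k2| + |k3|) * 16 + 1, by positivity, ?_⟩
  intro z1 z2 p1 p2 hz1 hz2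
  set q : M3 := p1 - p2 with hq
  have hqe : ∀ i α : Fin 3, p1 i α - p2 i α = q i α := fun i α => rfl
  have hLeg2 := hLeg z2 hz2 0 q
  rw [legendre_sum] at hLeg2
  have hterm : ∀ (z : V3) (p : M3),
      (∑ i, ∑ α, Wp k1 k2 k3 k4 z p i α * q i α) = 2 * Wbil k1 k2 k3 k4 z p q := by
    intro z p
    rw [← key_sum k1 k2 k3 k4 z p q, Finset.mul_sum]
    refine Finset.sum_congr rfl fun i _ => ?_
    rw [Finset.mul_sum]
    exact Finset.sum_congr rfl fun α _ => by rw [Wp_eq]; ring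
  have hsum : (∑ i, ∑ α,
        (Wp k1 k2 k3 k4 z1 p1 i α - Wp k1 k2 k3 k4 z2 p2 i α) * (p1 i α - p2 i α))
      = 2 * Wbil k1 k2 k3 k4 z1 p1 q - 2 * Wbil k1 k2 k3 k4 z2 p2 q := by
    calc (∑ i, ∑ α,
          (Wp k1 k2 k3 k4 z1 p1 i α - Wp k1 k2 k3 k4 z2 p2 i α) * (p1 i α - p2 i α))
        = ∑ i, ∑ α, (Wp k1 k2 k3 k4 z1 p1 i α * q i α - Wp k1 k2 k3 k4 z2 p2 i α * q i α) := by
          refine Finset.sum_congr rfl fun i _ => Finset.sum_congr rfl fun α _ => ?_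
          rw [hqe]; ring
      _ = (∑ i, ∑ α, Wp k1 k2 k3 k4 z1 p1 i α * q i α)
            - (∑ i, ∑ α, Wp k1 k2 k3 k4 z2 p2 i α * q i α) := by
          simp only [Finset.sum_sub_distrib]
      _ = 2 * Wbil k1 k2 k3 k4 z1 p1 q - 2 * Wbil k1 k2 k3 k4 z2 p2 q := by
          rw [hterm, hterm]
  have hlin := Wbil_sub_left k1 k2 k3 k4 z2 p1 p2 q
  rw [← hq] at hlin
  have habs := Wbil_z_diff_bound k1 k2 k3 k4 p1 q hz1 hz2
  have hneg := neg_abs_le (Wbil k1 k2 k3 k4 z1 p1 q - Wbil k1 k2 k3 k4 z2 p1 q)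
  have hp : (0:ℝ) ≤ frobN p1 * (eN (z1 - z2) * frobN q) := by
    have := frobN_nonneg p1; have := eN_nonneg (z1 - z2); have := frobN_nonneg q
    positivity
  rw [hsum]
  nlinarith [hLeg2, hlin, habs, hneg, hp]


end
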